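/- arXiv:2601.02541 — 2 statements merged into one kernel-verified Lean document; each statement's English description precedes it below -/
import Mathlib

section
/- Let Γ be a group of measure-preserving Lipschitz transformations of a metric measure space (X, d, μ) with μ(X) < ∞, equipped with ρ: Γ → [0,∞) satisfying ρ(γγ') ≤ ρ(γ) + ρ(γ') + C_ρ with finite sublevel sets. Define ᾱ(x,y) = sup{α : H_{x,y,α} is infinite}, where H_{x,y,α} = {γ : d(γx, y) ≤ e^{−αρ(γ)}}. Then ᾱ is invariant under the diagonal-type action (γ₁, γ₂)·(x, y) = (γ₁·x, γ₂·y) of Γ × Γ on X × X. -/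
open MeasureTheory

/-!
The bijection `γ ↦ δ = γ₂ γ γ₁⁻¹` of `Γ` maps `H_{x,y,α}` into the set of `δ` with
`d(δ γ₁ x, γ₂ y) ≤ K e^{-α ρ(γ₂⁻¹ δ γ₁)}`, where `K` is a Lipschitz constant of `γ₂`.
Quasi-subadditivity changes `ρ` by a bounded amount under this translation, and since `ρ → ∞`
along the cofinite filter, the constant `K` and that bounded error are absorbed by decreasing `α`
by an arbitrarily small amount. Hence `ᾱ(γ₁ x, γ₂ y) ≥ ᾱ(x, y)`, and the reverse inequality
follows by applying this to `γ₁⁻¹, γ₂⁻¹`.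
-/

open Filter Real

section QuasiSubadditive

variable {Γ : Type*} [Group Γ] {ρ : Γ → ℝ} {C : ℝ}

theorem map_mul_mul_le (hsub : ∀ γ γ' : Γ, ρ (γ * γ') ≤ ρ γ + ρ γ' + C) (a γ b : Γ) :
    ρ (a * γ * b) ≤ ρ a + ρ γ + ρ b + 2 * C := by
  rw [mul_assoc]
  linarith [hsub a (γ * b), hsub γ b]

theorem abs_map_mul_mul_sub_le (hsub : ∀ γ γ' : Γ, ρ (γ * γ') ≤ ρ γ + ρ γ' + C) (a γ b : Γ) :
    |ρ (a * γ * b) - ρ γ| ≤ max (ρ a + ρ b) (ρ a⁻¹ + ρ b⁻¹) + 2 * C := by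
  have hback : ρ γ ≤ ρ a⁻¹ + ρ (a * γ * b) + ρ b⁻¹ + 2 * C := by
    simpa [mul_assoc] using map_mul_mul_le hsub a⁻¹ (a * γ * b) b⁻¹
  rw [abs_sub_le_iff]
  constructor <;> linarith [map_mul_mul_le hsub a γ b, le_max_left (ρ a + ρ b) (ρ a⁻¹ + ρ b⁻¹),
    le_max_right (ρ a + ρ b) (ρ a⁻¹ + ρ b⁻¹)]

end QuasiSubadditive

theorem eventually_mul_exp_le_exp_of_abs_sub_le {ι : Type*} {l : Filter ι} {r r' : ι → ℝ}
    {K M α α' : ℝ} (hr : Tendsto r l atTop) (hM : ∀ i, |r' i - r i| ≤ M) (hα : α' < α) :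
    ∀ᶠ i in l, K * exp (-α * r i) ≤ exp (-α' * r' i) := by
  have hgrowth : Tendsto (fun i => exp ((α - α') * r i)) l atTop :=
    tendsto_exp_atTop.comp (hr.const_mul_atTop (sub_pos.2 hα))
  filter_upwards [hgrowth.eventually_ge_atTop (K * exp (|α'| * M))] with i hi
  have hpert : -α' * r i - |α'| * M ≤ -α' * r' i := by
    have h := le_abs_self (α' * (r' i - r i))
    rw [abs_mul] at h
    linarith [mul_le_mul_of_nonneg_left (hM i) (abs_nonneg α')]
  calc K * exp (-α * r i)
      = K * exp (|α'| * M) * (exp (-((α - α') * r i)) * exp (-α' * r i - |α'| * M)) := by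
        rw [mul_assoc, ← exp_add, ← exp_add]
        ring_nf
    _ ≤ exp ((α - α') * r i) * (exp (-((α - α') * r i)) * exp (-α' * r i - |α'| * M)) := by
        gcongr
    _ = exp (-α' * r i - |α'| * M) := by
        rw [← mul_assoc, ← exp_add, add_neg_cancel, exp_zero, one_mul]
    _ ≤ exp (-α' * r' i) := exp_le_exp.2 hpert

theorem infinite_setOf_dist_smul_smul_le_exp {Γ X : Type*} [Group Γ] [MetricSpace X]
    [MulAction Γ X] {ρ : Γ → ℝ} {C : ℝ} (hsub : ∀ γ γ' : Γ, ρ (γ * γ') ≤ ρ γ + ρ γ' + C)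
    (hfin : ∀ t : ℝ, {γ : Γ | ρ γ ≤ t}.Finite) {K : NNReal} {γ₁ γ₂ : Γ}
    (hK : LipschitzWith K (fun x : X => γ₂ • x)) {x y : X} {α α' : ℝ} (hα : α' < α)
    (hH : {γ : Γ | dist (γ • x) y ≤ exp (-α * ρ γ)}.Infinite) :
    {γ : Γ | dist (γ • γ₁ • x) (γ₂ • y) ≤ exp (-α' * ρ γ)}.Infinite := by
  set δ : Γ → Γ := fun γ => γ₂ * γ * γ₁⁻¹
  have hδ : Function.Injective δ := fun a b hab => by simpa [δ] using hab
  have hsmul : ∀ γ, δ γ • γ₁ • x = γ₂ • γ • x := fun γ => by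
    simp only [δ, smul_smul, inv_mul_cancel_right]
  have hρ : Tendsto ρ cofinite atTop := (northcott_iff_tendsto ρ).1 ⟨hfin⟩
  have hdecay : ∀ᶠ γ in cofinite, (K : ℝ) * exp (-α * ρ γ) ≤ exp (-α' * ρ (δ γ)) :=
    eventually_mul_exp_le_exp_of_abs_sub_le hρ (abs_map_mul_mul_sub_le hsub γ₂ · γ₁⁻¹) hα
  have htransl : ∃ᶠ γ in cofinite, dist (δ γ • γ₁ • x) (γ₂ • y) ≤ exp (-α' * ρ (δ γ)) := by
    refine ((frequently_cofinite_iff_infinite.2 hH).and_eventually hdecay).mono ?_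
    rintro γ ⟨hdist, hexp⟩
    calc dist (δ γ • γ₁ • x) (γ₂ • y) = dist (γ₂ • γ • x) (γ₂ • y) := by rw [hsmul]
      _ ≤ K * dist (γ • x) y := hK.dist_le_mul _ _
      _ ≤ K * exp (-α * ρ γ) := by gcongr
      _ ≤ exp (-α' * ρ (δ γ)) := hexp
  exact ((frequently_cofinite_iff_infinite.1 htransl).image hδ.injOn).mono
    (Set.image_subset_iff.2 fun _ h => h)

theorem EReal.sSup_setOf_coe_le_of_forall_lt {P Q : ℝ → Prop}
    (h : ∀ α β : ℝ, β < α → P α → Q β) :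
    sSup {a : EReal | ∃ α : ℝ, a = α ∧ P α} ≤ sSup {a : EReal | ∃ α : ℝ, a = α ∧ Q α} := by
  refine sSup_le ?_
  rintro _ ⟨α, rfl, hα⟩
  refine le_of_forall_lt_imp_le_of_dense fun c hc => ?_
  induction c using EReal.rec with
  | bot => exact bot_le
  | coe β => exact le_sSup ⟨β, rfl, h α β (EReal.coe_lt_coe_iff.1 hc) hα⟩
  | top => exact absurd hc (not_lt_of_ge le_top)

theorem stmt10_general {Γ X : Type*} [Group Γ] [MetricSpace X]
    [MulAction Γ X]
    (hlip : ∀ γ : Γ, ∃ K : NNReal, LipschitzWith K (fun x : X => γ • x))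
    (ρ : Γ → ℝ) (Cρ : ℝ)
    (hsub : ∀ γ γ' : Γ, ρ (γ * γ') ≤ ρ γ + ρ γ' + Cρ)
    (hfin : ∀ t : ℝ, {γ : Γ | ρ γ ≤ t}.Finite)
    (abar : X → X → EReal)
    (habar : ∀ x y : X, abar x y =
      sSup {a : EReal | ∃ α : ℝ, a = (α : EReal) ∧
        {γ : Γ | dist (γ • x) y ≤ Real.exp (-α * ρ γ)}.Infinite})
    (γ₁ γ₂ : Γ) (x y : X) :
    abar (γ₁ • x) (γ₂ • y) = abar x y := by
  have hle : ∀ (g₁ g₂ : Γ) (x y : X), abar x y ≤ abar (g₁ • x) (g₂ • y) := fun g₁ g₂ x y => by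
    obtain ⟨K, hK⟩ := hlip g₂
    rw [habar, habar]
    exact EReal.sSup_setOf_coe_le_of_forall_lt fun α β hβ =>
      infinite_setOf_dist_smul_smul_le_exp hsub hfin hK hβ
  refine le_antisymm ?_ (hle γ₁ γ₂ x y)
  simpa only [inv_smul_smul] using hle γ₁⁻¹ γ₂⁻¹ (γ₁ • x) (γ₂ • y)

/-- the Diophantine exponent ᾱ(x,y) = sup{α : H_{x,y,α} infinite}
is invariant under the Γ × Γ action (γ₁,γ₂)·(x,y) = (γ₁x, γ₂y). -/
theorem stmt10 {Γ X : Type*} [Group Γ] [MetricSpace X] [MeasurableSpace X]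
    [MulAction Γ X]
    (μ : Measure X) [IsFiniteMeasure μ]
    (hmp : ∀ γ : Γ, MeasurePreserving (fun x => γ • x) μ μ)
    (hlip : ∀ γ : Γ, ∃ K : NNReal, LipschitzWith K (fun x : X => γ • x))
    (ρ : Γ → ℝ) (Cρ : ℝ) (hρ0 : ∀ γ, 0 ≤ ρ γ)
    (hsub : ∀ γ γ' : Γ, ρ (γ * γ') ≤ ρ γ + ρ γ' + Cρ)
    (hfin : ∀ t : ℝ, {γ : Γ | ρ γ ≤ t}.Finite)
    (abar : X → X → EReal)
    (habar : ∀ x y : X, abar x y =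
      sSup {a : EReal | ∃ α : ℝ, a = (α : EReal) ∧
        {γ : Γ | dist (γ • x) y ≤ Real.exp (-α * ρ γ)}.Infinite})
    (γ₁ γ₂ : Γ) (x y : X) :
    abar (γ₁ • x) (γ₂ • y) = abar x y :=
  stmt10_general hlip ρ Cρ hsub hfin abar habar γ₁ γ₂ x y
end

section
/- With notation as in the preceding context, the induced map Φ: (SL₂(ℝ) × Ẋ)/Γ → (marked 1-forms)/Diff⁺ is injective: if (g·ω, x₁,…,x_{d−1}, x)·φ = (h·ω, x₁,…,x_{d−1}, y) for some orientation-preserving diffeomorphism φ, then g⁻¹h ∈ Γ and (g, x)·(g⁻¹h) = (h, y). -/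
theorem stmt15_general {G D X Ω : Type*} [Group G] [Group D] [MulAction G Ω] [MulAction D X]
    (R : Ω → D → Ω)
    (hcomm : ∀ (g : G) (η : Ω) (φ : D), R (g • η) φ = g • R η φ)
    (Γ : Subgroup G) (σ : Γ →* D)
    (ω : Ω) (k : ℕ) (marks : Fin k → X)
    (hΓ : ∀ a : G, a ∈ Γ ↔ ∃ φ : D, R ω φ = a • ω ∧ ∀ i, φ⁻¹ • marks i = marks i)
    (hσ : ∀ γ : Γ, R ω (σ γ) = (γ : G) • ω ∧ ∀ i, (σ γ)⁻¹ • marks i = marks i)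
    (huniq : ∀ φ ψ : D, R ω φ = R ω ψ → (∀ i, φ⁻¹ • marks i = marks i) →
      (∀ i, ψ⁻¹ • marks i = marks i) → φ = ψ)
    (g h : G) (x y : X) (φ : D)
    (hpull : R (g • ω) φ = h • ω)
    (hmk : ∀ i, φ⁻¹ • marks i = marks i)
    (hy : y = φ⁻¹ • x) :
    ∃ hm : g⁻¹ * h ∈ Γ,
      g * (g⁻¹ * h) = h ∧ (σ ⟨g⁻¹ * h, hm⟩)⁻¹ • x = y := by
  have hR : R ω φ = (g⁻¹ * h) • ω := by
    rw [mul_smul, ← hpull, hcomm, inv_smul_smul]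
  have hm : g⁻¹ * h ∈ Γ := (hΓ _).mpr ⟨φ, hR, hmk⟩
  obtain ⟨hσR, hσmarks⟩ := hσ ⟨g⁻¹ * h, hm⟩
  have hσφ : σ ⟨g⁻¹ * h, hm⟩ = φ := huniq _ _ (hσR.trans hR.symm) hσmarks hmk
  exact ⟨hm, mul_inv_cancel_left g h, by rw [hσφ, hy]⟩

/-- injectivity of the induced map Φ : (SL₂(ℝ) × Ẋ)/Γ → (marked
1-forms)/Diff⁺: if (g·ω, marks, x)·φ = (h·ω, marks, y) then g⁻¹h ∈ Γ and
(g,x)·(g⁻¹h) = (h,y).  Abstract setting as in Statement 14, with Γ the image of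
the differential on affine maps fixing the marked zeros. -/
theorem stmt15 {G D X Ω : Type*} [Group G] [Group D] [MulAction G Ω] [MulAction D X]
    (R : Ω → D → Ω)
    (hRmul : ∀ (η : Ω) (φ ψ : D), R η (φ * ψ) = R (R η φ) ψ)
    (hcomm : ∀ (g : G) (η : Ω) (φ : D), R (g • η) φ = g • R η φ)
    (Γ : Subgroup G) (σ : Γ →* D)
    (ω : Ω) (k : ℕ) (marks : Fin k → X)
    (hfree : ∀ a b : G, a • ω = b • ω → a = b)
    (hΓ : ∀ a : G, a ∈ Γ ↔ ∃ φ : D, R ω φ = a • ω ∧ ∀ i, φ⁻¹ • marks i = marks i)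
    (hσ : ∀ γ : Γ, R ω (σ γ) = (γ : G) • ω ∧ ∀ i, (σ γ)⁻¹ • marks i = marks i)
    (huniq : ∀ φ ψ : D, R ω φ = R ω ψ → (∀ i, φ⁻¹ • marks i = marks i) →
      (∀ i, ψ⁻¹ • marks i = marks i) → φ = ψ)
    (g h : G) (x y : X) (φ : D)
    (hpull : R (g • ω) φ = h • ω)
    (hmk : ∀ i, φ⁻¹ • marks i = marks i)
    (hy : y = φ⁻¹ • x) :
    ∃ hm : g⁻¹ * h ∈ Γ,
      g * (g⁻¹ * h) = h ∧ (σ ⟨g⁻¹ * h, hm⟩)⁻¹ • x = y :=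
  stmt15_general R hcomm Γ σ ω k marks hΓ hσ huniq g h x y φ hpull hmk hy
end
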